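/- arXiv:1903.03742 — 2 statements merged into one kernel-verified Lean document; each statement's English description precedes it below -/
import Mathlib

section
/- Let (a_n^{(j)})_{n} for j = 1,…,p be sequences of nonnegative reals with a_n^{(j)} = O(1/n) for all j (all ‘eigenvalues’ vanish at rate 1/n). Let c_{1n} → 0, c_{2n} → 0 with n² c_{1n} c_{2n} → ∞. Define s_n^{(j)} = a_n^{(j)}/(a_n^{(j)}+1), s_n^{*(j)} = (s_n^{(j)2} + c_{1n})/(s_n^{(j+1)2} + c_{1n}) − 1 (with s_n^{(p+1)} := 0), and r_n^{(j)} = (s_n^{*(j+1)} + c_{2n})/(s_n^{*(j)} + c_{2n}) (with s_n^{*(p+1)} := 0). Then for every fixed τ ∈ (0,1), eventually r_n^{(j)} > τ for all j ∈ {1,…,p}. -/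
open Filter

/-- The transform `s_n^{(j)} = a_n^{(j)}/(a_n^{(j)}+1)` of the TDRR criterion, with the
convention `s_n^{(j)} = 0` for indices `j ≥ p` (0-indexed; `j = p` plays the role of the
extra index `p+1` in 1-indexed notation). -/
noncomputable def tdrrS (p : ℕ) (a : ℕ → ℕ → ℝ) (n j : ℕ) : ℝ :=
  if j < p then a n j / (a n j + 1) else 0

/-- The first ridge ratio `s_n^{*(j)} = (s_n^{(j)2}+c₁ₙ)/(s_n^{(j+1)2}+c₁ₙ) − 1`, with the
convention `s_n^{*(j)} = 0` for `j ≥ p`. -/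
noncomputable def tdrrSStar (p : ℕ) (a : ℕ → ℕ → ℝ) (c1 : ℕ → ℝ) (n j : ℕ) : ℝ :=
  if j < p then ((tdrrS p a n j) ^ 2 + c1 n) / ((tdrrS p a n (j + 1)) ^ 2 + c1 n) - 1 else 0

/-- The second ridge ratio `r_n^{(j)} = (s_n^{*(j+1)}+c₂ₙ)/(s_n^{*(j)}+c₂ₙ)`. -/
noncomputable def tdrrR (p : ℕ) (a : ℕ → ℕ → ℝ) (c1 c2 : ℕ → ℝ) (n j : ℕ) : ℝ :=
  (tdrrSStar p a c1 n (j + 1) + c2 n) / (tdrrSStar p a c1 n j + c2 n)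

/- With `aₙ⁽ʲ⁾ ≤ C/n` every `sₙ⁽ʲ⁾²` lies in `[0, C²/n²]`, so each first ridge ratio
satisfies `|sₙ^{*(j)}| ≤ C²/(n² c₁ₙ) =: εₙ`. A ratio `(v + c)/(u + c)` with `|u|, |v| ≤ ε` exceeds
`τ` as soon as `(1 + τ) ε < (1 - τ) c`, and for `c = c₂ₙ` this is `(1 + τ) C² < (1 - τ) n² c₁ₙ c₂ₙ`,
which eventually holds since `n² c₁ₙ c₂ₙ → ∞`. -/

lemma tdrrS_sq_le {p : ℕ} {a : ℕ → ℕ → ℝ} {n : ℕ} {b : ℝ}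
    (ha0 : ∀ j < p, 0 ≤ a n j) (hab : ∀ j < p, a n j ≤ b) (k : ℕ) :
    tdrrS p a n k ^ 2 ≤ b ^ 2 := by
  unfold tdrrS
  split_ifs with hk
  · have hnonneg := ha0 k hk
    exact pow_le_pow_left₀ (by positivity)
      ((div_le_self hnonneg (by linarith)).trans (hab k hk)) 2
  · simpa using sq_nonneg b

lemma abs_add_div_add_sub_one_le {x y c δ : ℝ} (hx : 0 ≤ x) (hxδ : x ≤ δ) (hy : 0 ≤ y)
    (hyδ : y ≤ δ) (hc : 0 < c) : |(x + c) / (y + c) - 1| ≤ δ / c := by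
  have hyc : 0 < y + c := by linarith
  have hdiff : (x + c) / (y + c) - 1 = (x - y) / (y + c) := by
    field_simp
    ring
  rw [hdiff, abs_div, abs_of_pos hyc]
  exact div_le_div₀ (by linarith) (abs_sub_le_iff.mpr ⟨by linarith, by linarith⟩) hc (by linarith)

lemma abs_tdrrSStar_le {p : ℕ} {a : ℕ → ℕ → ℝ} {c1 : ℕ → ℝ} {n : ℕ} {δ : ℝ}
    (hc1 : 0 < c1 n) (hs : ∀ k, tdrrS p a n k ^ 2 ≤ δ) (k : ℕ) :
    |tdrrSStar p a c1 n k| ≤ δ / c1 n := by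
  unfold tdrrSStar
  split_ifs
  · exact abs_add_div_add_sub_one_le (sq_nonneg _) (hs k) (sq_nonneg _) (hs (k + 1)) hc1
  · have hδ : 0 ≤ δ := (sq_nonneg _).trans (hs 0)
    simpa using div_nonneg hδ hc1.le

lemma lt_add_div_add_of_abs_le {τ u v ε c : ℝ} (hτ0 : 0 ≤ τ) (hτ1 : τ < 1) (hu : |u| ≤ ε)
    (hv : |v| ≤ ε) (h : (1 + τ) * ε < (1 - τ) * c) : τ < (v + c) / (u + c) := by
  obtain ⟨hu₁, hu₂⟩ := abs_le.mp hu
  obtain ⟨hv₁, -⟩ := abs_le.mp hv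
  have hε : 0 ≤ ε := (abs_nonneg u).trans hu
  have hc : ε < c := by nlinarith
  rw [lt_div_iff₀ (by linarith)]
  nlinarith

theorem stmt12_general {p : ℕ} (a : ℕ → ℕ → ℝ) (c1 c2 : ℕ → ℝ)
    (ha0 : ∀ n j, j < p → 0 ≤ a n j)
    (C : ℝ) (hC : ∀ n, 1 ≤ n → ∀ j < p, a n j ≤ C / n)
    (hc1pos : ∀ n, 0 < c1 n)
    (hprod : Tendsto (fun n : ℕ => (n : ℝ) ^ 2 * c1 n * c2 n) atTop atTop) :
    ∀ τ : ℝ, 0 < τ → τ < 1 →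
      ∀ᶠ n in atTop, ∀ j < p, τ < tdrrR p a c1 c2 n j := by
  intro τ hτ0 hτ1
  have hgrowth : Tendsto (fun n : ℕ => (1 - τ) * ((n : ℝ) ^ 2 * c1 n * c2 n)) atTop atTop :=
    hprod.const_mul_atTop (by linarith)
  filter_upwards [hgrowth.eventually_gt_atTop ((1 + τ) * C ^ 2), eventually_ge_atTop 1]
    with n hn hn1 j _
  have hn0 : (0 : ℝ) < n := by exact_mod_cast hn1
  have hc1n := hc1pos n
  have hstar (k : ℕ) : |tdrrSStar p a c1 n k| ≤ (C / n) ^ 2 / c1 n :=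
    abs_tdrrSStar_le hc1n (tdrrS_sq_le (ha0 n) (hC n hn1)) k
  refine lt_add_div_add_of_abs_le hτ0.le hτ1 (hstar j) (hstar (j + 1)) ?_
  rw [div_pow, div_div, mul_div_assoc', div_lt_iff₀ (by positivity)]
  linarith

/-- if all the nonnegative 'eigenvalue' sequences vanish at rate `O(1/n)`
and the ridges satisfy `c₁ₙ → 0`, `c₂ₙ → 0`, `n² c₁ₙ c₂ₙ → ∞`, then for every fixed
`τ ∈ (0,1)`, eventually `r_n^{(j)} > τ` for all `j ∈ {1,…,p}` (0-indexed: `j < p`). -/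
theorem stmt12 {p : ℕ} (a : ℕ → ℕ → ℝ) (c1 c2 : ℕ → ℝ)
    (ha0 : ∀ n j, j < p → 0 ≤ a n j)
    (C : ℝ) (hC : ∀ n, 1 ≤ n → ∀ j < p, a n j ≤ C / n)
    (hc1pos : ∀ n, 0 < c1 n) (hc2pos : ∀ n, 0 < c2 n)
    (hc1 : Tendsto c1 atTop (nhds 0)) (hc2 : Tendsto c2 atTop (nhds 0))
    (hprod : Tendsto (fun n : ℕ => (n : ℝ) ^ 2 * c1 n * c2 n) atTop atTop) :
    ∀ τ : ℝ, 0 < τ → τ < 1 →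
      ∀ᶠ n in atTop, ∀ j < p, τ < tdrrR p a c1 c2 n j :=
  stmt12_general a c1 c2 ha0 C hC hc1pos hprod
end

section
/- Let (a_n^{(j)})_{j=1,…,p} be nonnegative sequences such that a_n^{(j)} → λ_j with λ_1 ≥ ⋯ ≥ λ_q > 0 = λ_{q+1} = ⋯ = λ_p for some 1 ≤ q ≤ p−1, and |a_n^{(j)} − λ_j| = O(1/√n) for all j. Let c_{1n} → 0, c_{2n} → 0 with n c_{1n} c_{2n} → ∞. Define s, s*, r as in the TDRR criterion. Then for every fixed τ ∈ (0,1), eventually r_n^{(q)} ≤ τ and r_n^{(j)} > τ for all j > q. -/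
open Filter

set_option maxHeartbeats 1000000 in
/-- if the nonnegative 'eigenvalue' sequences `a_n^{(j)}` converge at rate
`O(1/√n)` to limits `λ₁ ≥ ⋯ ≥ λ_q > 0 = λ_{q+1} = ⋯ = λ_p` (0-indexed: `λ_j > 0` for
`j < q`, `λ_j = 0` for `j ≥ q`), with `1 ≤ q ≤ p−1`, and the ridges satisfy `c₁ₙ → 0`,
`c₂ₙ → 0`, `n c₁ₙ c₂ₙ → ∞`, then for every fixed `τ ∈ (0,1)`, eventually
`r_n^{(q)} ≤ τ` (0-indexed: index `q−1`) and `r_n^{(j)} > τ` for all `j > q`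
(0-indexed: `q ≤ j < p`). -/
theorem stmt13 {p q : ℕ} (hq1 : 1 ≤ q) (hqp : q < p)
    (a : ℕ → ℕ → ℝ) (lam : ℕ → ℝ) (c1 c2 : ℕ → ℝ)
    (ha0 : ∀ n j, j < p → 0 ≤ a n j)
    (hlampos : ∀ j < q, 0 < lam j)
    (hlamzero : ∀ j, q ≤ j → lam j = 0)
    (hlamord : ∀ i j : ℕ, i ≤ j → j < p → lam j ≤ lam i)
    (hlim : ∀ j < p, Tendsto (fun n => a n j) atTop (nhds (lam j)))
    (C : ℝ) (hC : ∀ n, 1 ≤ n → ∀ j < p, |a n j - lam j| ≤ C / Real.sqrt n)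
    (hc1pos : ∀ n, 0 < c1 n) (hc2pos : ∀ n, 0 < c2 n)
    (hc1 : Tendsto c1 atTop (nhds 0)) (hc2 : Tendsto c2 atTop (nhds 0))
    (hprod : Tendsto (fun n : ℕ => (n : ℝ) * c1 n * c2 n) atTop atTop) :
    ∀ τ : ℝ, 0 < τ → τ < 1 →
      ∀ᶠ n in atTop, tdrrR p a c1 c2 n (q - 1) ≤ τ ∧
        ∀ j, q ≤ j → j < p → τ < tdrrR p a c1 c2 n j := by
  intro τ hτ0 hτ1
  have hq1p : q - 1 < p := by omega
  have hqq : q - 1 + 1 = q := by omega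
  have hqpp : q < p := hqp
  -- C is nonnegative
  have hCnn : 0 ≤ C := by
    have h := hC 1 le_rfl 0 (by omega)
    rw [Nat.cast_one, Real.sqrt_one, div_one] at h
    exact le_trans (abs_nonneg _) h
  -- bounds on s for j ≥ q
  have hsle : ∀ n : ℕ, 1 ≤ n → ∀ j, q ≤ j →
      0 ≤ tdrrS p a n j ∧ tdrrS p a n j ≤ C / Real.sqrt n := by
    intro n hn j hj
    by_cases hjp : j < p
    · have ha := ha0 n j hjp
      have h1 : (0:ℝ) < a n j + 1 := by linarith
      have h3 : a n j ≤ C / Real.sqrt n := by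
        have h := hC n hn j hjp
        rwa [hlamzero j hj, sub_zero, abs_of_nonneg ha] at h
      refine ⟨?_, ?_⟩
      · simp only [tdrrS, if_pos hjp]; positivity
      · simp only [tdrrS, if_pos hjp]
        have h2 : a n j / (a n j + 1) ≤ a n j := by
          rw [div_le_iff₀ h1]; nlinarith
        linarith
    · simp only [tdrrS, if_neg hjp]
      exact ⟨le_refl 0, div_nonneg hCnn (Real.sqrt_nonneg _)⟩
  -- bound on sStar for j ≥ q
  have hsstar : ∀ n : ℕ, 1 ≤ n → ∀ j, q ≤ j →
      |tdrrSStar p a c1 n j| ≤ C ^ 2 / (n * c1 n) := by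
    intro n hn j hj
    have hnpos : (0:ℝ) < n := by exact_mod_cast hn
    have hc1n := hc1pos n
    have hrhs : 0 ≤ C ^ 2 / (↑n * c1 n) := by positivity
    by_cases hjp : j < p
    · obtain ⟨h0j, h1j⟩ := hsle n hn j hj
      obtain ⟨h0j', h1j'⟩ := hsle n hn (j + 1) (by omega)
      have hsq : ∀ x : ℝ, 0 ≤ x → x ≤ C / Real.sqrt n → x ^ 2 ≤ C ^ 2 / n := by
        intro x hx0 hx1
        have h : x ^ 2 ≤ (C / Real.sqrt n) ^ 2 := by nlinarith
        calc x ^ 2 ≤ (C / Real.sqrt n) ^ 2 := h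
          _ = C ^ 2 / Real.sqrt n ^ 2 := by rw [div_pow]
          _ = C ^ 2 / n := by rw [Real.sq_sqrt hnpos.le]
      have hj2 := hsq _ h0j h1j
      have hj2' := hsq _ h0j' h1j'
      have hden : 0 < (tdrrS p a n (j + 1)) ^ 2 + c1 n := by positivity
      simp only [tdrrSStar, if_pos hjp]
      rw [div_sub_one hden.ne', abs_div, abs_of_pos hden]
      have hnum : |tdrrS p a n j ^ 2 + c1 n - (tdrrS p a n (j + 1) ^ 2 + c1 n)| ≤ C ^ 2 / n := by
        rw [abs_sub_le_iff]
        constructor <;> nlinarith [sq_nonneg (tdrrS p a n j), sq_nonneg (tdrrS p a n (j + 1))]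
      calc |tdrrS p a n j ^ 2 + c1 n - (tdrrS p a n (j + 1) ^ 2 + c1 n)| /
            (tdrrS p a n (j + 1) ^ 2 + c1 n)
          ≤ (C ^ 2 / n) / c1 n := by
            apply div_le_div₀ (by positivity) hnum hc1n
            nlinarith [sq_nonneg (tdrrS p a n (j + 1))]
        _ = C ^ 2 / (↑n * c1 n) := by rw [div_div]
    · simp only [tdrrSStar, if_neg hjp, abs_zero]
      exact hrhs
  -- tendsto facts
  have hlam1 : 0 < lam (q - 1) := hlampos (q - 1) (by omega)
  have hs1 : Tendsto (fun n => tdrrS p a n (q - 1)) atTop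
      (nhds (lam (q - 1) / (lam (q - 1) + 1))) := by
    simp only [tdrrS, if_pos hq1p]
    exact (hlim (q - 1) hq1p).div ((hlim (q - 1) hq1p).add tendsto_const_nhds)
      (ne_of_gt (by linarith : (0:ℝ) < lam (q - 1) + 1))
  have hs2 : Tendsto (fun n => tdrrS p a n q) atTop (nhds 0) := by
    have hl : Tendsto (fun n => a n q) atTop (nhds 0) := by
      have := hlim q hqpp; rwa [hlamzero q le_rfl] at this
    have h : Tendsto (fun n => a n q / (a n q + 1)) atTop (nhds (0 / (0 + 1))) :=
      hl.div (hl.add tendsto_const_nhds) (by norm_num)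
    simp only [tdrrS, if_pos hqpp]
    simpa using h
  have hσpos : 0 < (lam (q - 1) / (lam (q - 1) + 1)) ^ 2 := by positivity
  -- the denominator of sStar (q-1) tends to 0 within (0,∞)
  have hdenpos : ∀ n, 0 < (tdrrS p a n q) ^ 2 + c1 n := fun n => by
    have := hc1pos n; positivity
  have hden0 : Tendsto (fun n => (tdrrS p a n q) ^ 2 + c1 n) atTop (nhdsWithin 0 (Set.Ioi 0)) := by
    apply tendsto_nhdsWithin_of_tendsto_nhds_of_eventually_within
    · have h := (hs2.pow 2).add hc1
      simpa using h
    · exact Filter.Eventually.of_forall fun n => Set.mem_Ioi.mpr (hdenpos n)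
  have hinv : Tendsto (fun n => ((tdrrS p a n q) ^ 2 + c1 n)⁻¹) atTop atTop :=
    tendsto_inv_nhdsGT_zero.comp hden0
  have hnum1 : Tendsto (fun n => (tdrrS p a n (q - 1)) ^ 2 + c1 n) atTop
      (nhds ((lam (q - 1) / (lam (q - 1) + 1)) ^ 2)) := by
    have h := (hs1.pow 2).add hc1
    simpa using h
  have hbig : Tendsto (fun n => tdrrSStar p a c1 n (q - 1)) atTop atTop := by
    have h : Tendsto (fun n => ((tdrrS p a n (q - 1)) ^ 2 + c1 n) /
        ((tdrrS p a n q) ^ 2 + c1 n) - 1) atTop atTop := by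
      apply tendsto_atTop_add_const_right
      simp only [div_eq_mul_inv]
      exact hnum1.pos_mul_atTop hσpos hinv
    have heq : (fun n => tdrrSStar p a c1 n (q - 1)) = fun n =>
        ((tdrrS p a n (q - 1)) ^ 2 + c1 n) / ((tdrrS p a n q) ^ 2 + c1 n) - 1 := by
      funext n
      simp only [tdrrSStar, if_pos hq1p, hqq]
    rw [heq]
    exact h
  -- δ tends to 0
  have hδ : Tendsto (fun n : ℕ => C ^ 2 * ((n : ℝ) * c1 n * c2 n)⁻¹) atTop (nhds 0) := by
    have h := hprod.inv_tendsto_atTop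
    have := h.const_mul (C ^ 2)
    simpa using this
  -- eventual conditions
  have hE1 : ∀ᶠ n : ℕ in atTop, C ^ 2 * ((n : ℝ) * c1 n * c2 n)⁻¹ < min 1 ((1 - τ) / 2) :=
    hδ.eventually_lt_const (lt_min (by norm_num) (by linarith))
  have hE2 : ∀ᶠ n in atTop, 1 ≤ tdrrSStar p a c1 n (q - 1) := hbig.eventually_ge_atTop 1
  have hE3 : ∀ᶠ n in atTop, c2 n < τ / 2 := hc2.eventually_lt_const (by linarith)
  have hE4 : ∀ᶠ n in atTop, 1 ≤ n := eventually_ge_atTop 1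
  filter_upwards [hE1, hE2, hE3, hE4] with n h1 h2 h3 h4
  have hnpos : (0:ℝ) < n := by exact_mod_cast h4
  have hc1n := hc1pos n
  have hc2n := hc2pos n
  obtain ⟨δ, hδdef⟩ : ∃ δ : ℝ, δ = C ^ 2 * ((n : ℝ) * c1 n * c2 n)⁻¹ := ⟨_, rfl⟩
  rw [← hδdef] at h1
  have hδ0 : 0 ≤ δ := by rw [hδdef]; positivity
  have hδ1 : δ < 1 := lt_of_lt_of_le h1 (min_le_left _ _)
  have hδ2 : δ < (1 - τ) / 2 := lt_of_lt_of_le h1 (min_le_right _ _)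
  have hkey : C ^ 2 / ((n : ℝ) * c1 n) = δ * c2 n := by
    rw [hδdef]
    field_simp
  have hbound : ∀ j, q ≤ j → |tdrrSStar p a c1 n j| ≤ δ * c2 n := by
    intro j hj
    have := hsstar n h4 j hj
    rwa [hkey] at this
  constructor
  · -- r n (q-1) ≤ τ
    have hbq := hbound q le_rfl
    rw [abs_le] at hbq
    have hδc2 : δ * c2 n ≤ c2 n := mul_le_of_le_one_left hc2n.le hδ1.le
    have hden : 1 ≤ tdrrSStar p a c1 n (q - 1) + c2 n := by linarith
    have hnum0 : 0 ≤ tdrrSStar p a c1 n q + c2 n := by linarith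
    have hnum : tdrrSStar p a c1 n q + c2 n ≤ 2 * c2 n := by linarith
    simp only [tdrrR, hqq]
    calc (tdrrSStar p a c1 n q + c2 n) / (tdrrSStar p a c1 n (q - 1) + c2 n)
        ≤ tdrrSStar p a c1 n q + c2 n := div_le_self hnum0 hden
      _ ≤ 2 * c2 n := hnum
      _ ≤ τ := by linarith
  · -- τ < r n j for q ≤ j < p
    intro j hjq hjp
    have hbj := hbound j hjq
    have hbj' := hbound (j + 1) (by omega)
    rw [abs_le] at hbj hbj'
    have hδc2' : δ * c2 n < c2 n := mul_lt_of_lt_one_left hc2n hδ1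
    have hdenpos' : 0 < tdrrSStar p a c1 n j + c2 n := by linarith [hbj.1]
    have h5 : τ * tdrrSStar p a c1 n j ≤ τ * (δ * c2 n) :=
      mul_le_mul_of_nonneg_left hbj.2 hτ0.le
    have h6 : τ * (δ * c2 n) ≤ δ * c2 n :=
      mul_le_of_le_one_left (mul_nonneg hδ0 hc2n.le) hτ1.le
    have h7 : (2 * δ) * c2 n < (1 - τ) * c2 n :=
      mul_lt_mul_of_pos_right (by linarith) hc2n
    simp only [tdrrR]
    rw [lt_div_iff₀ hdenpos', mul_add]
    nlinarith [hbj'.1]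
end
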